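/- Let (E, L, E) be a set-finite labeled space where the graph E has no sinks (so E = E_reg). Then (E, L, E) is minimal if and only if (E, L, E) is strongly cofinal. -/

import Mathlib

universe u v

variable {V : Type u} {Λ : Type v}

/-- The relative range `r(S, α)` of a set of vertices along a labeled path. -/
def relRange (Edge : V → Λ → V → Prop) : Set V → List Λ → Set V
  | S, [] => S
  | S, a :: α => relRange Edge {w | ∃ u ∈ S, Edge u a w} α

/-- The range `r(α)` of a labeled path. -/
def lrange (Edge : V → Λ → V → Prop) (α : List Λ) : Set V :=
  relRange Edge Set.univ α

/-- `α` is a (nonempty) labeled path of the labeled graph. -/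
def IsLP (Edge : V → Λ → V → Prop) (α : List Λ) : Prop :=
  α ≠ [] ∧ (lrange Edge α).Nonempty

/-- `L(SE¹)`: labels of edges emitted from `S`. -/
def edgeLabels (Edge : V → Λ → V → Prop) (S : Set V) : Set Λ :=
  {a | ∃ u ∈ S, ∃ w, Edge u a w}

/-- `S` is regular: every nonempty `B ∈ ℬ` with `B ⊆ S` emits a finite nonzero set of labels. -/
def RegularSet (Edge : V → Λ → V → Prop) (ℬ : Set (Set V)) (S : Set V) : Prop :=
  ∀ B ∈ ℬ, B ⊆ S → B.Nonempty →
    (edgeLabels Edge B).Finite ∧ (edgeLabels Edge B).Nonempty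

/-- `H ⊆ ℬ` is hereditary. -/
def Hered (Edge : V → Λ → V → Prop) (ℬ H : Set (Set V)) : Prop :=
  H ⊆ ℬ ∧ (∀ A ∈ H, ∀ α : List Λ, IsLP Edge α → relRange Edge A α ∈ H) ∧
    (∀ A ∈ H, ∀ B ∈ H, A ∪ B ∈ H) ∧ (∀ A ∈ H, ∀ B ∈ ℬ, B ⊆ A → B ∈ H)

/-- `H` is saturated. -/
def Satur (Edge : V → Λ → V → Prop) (ℬ H : Set (Set V)) : Prop :=
  ∀ A ∈ ℬ, RegularSet Edge ℬ A →
    (∀ α : List Λ, IsLP Edge α → relRange Edge A α ∈ H) → A ∈ H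

/-- `H(A)`: sets covered by finitely many relative ranges `r(A, αᵢ)`, `αᵢ ∈ L^#(E)`. -/
def HSet (Edge : V → Λ → V → Prop) (ℬ : Set (Set V)) (A : Set V) : Set (Set V) :=
  {B ∈ ℬ | ∃ l : List (List Λ), (∀ α ∈ l, α = [] ∨ IsLP Edge α) ∧
    B ⊆ ⋃ α ∈ l, relRange Edge A α}

/-- `S(H(A))`: the saturation of `H(A)`. -/
def SHSet (Edge : V → Λ → V → Prop) (ℬ : Set (Set V)) (A : Set V) : Set (Set V) :=
  {B ∈ ℬ | ∃ n : ℕ,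
    (∀ β : List Λ, (β = [] ∨ IsLP Edge β) → β.length = n →
      relRange Edge B β ∈ HSet Edge ℬ A) ∧
    (∀ γ : List Λ, (γ = [] ∨ IsLP Edge γ) → γ.length < n →
      ∃ C ∈ HSet Edge ℬ A, ∃ D ∈ ℬ, RegularSet Edge ℬ D ∧ relRange Edge B γ = C ∪ D)}

/-- `ℬ` is an accommodating set for the labeled graph. -/
def Accommodating (Edge : V → Λ → V → Prop) (ℬ : Set (Set V)) : Prop :=
  (∀ α : List Λ, IsLP Edge α → lrange Edge α ∈ ℬ) ∧
    (∀ A ∈ ℬ, ∀ α : List Λ, IsLP Edge α → relRange Edge A α ∈ ℬ) ∧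
    (∀ A ∈ ℬ, ∀ B ∈ ℬ, A ∪ B ∈ ℬ) ∧ (∀ A ∈ ℬ, ∀ B ∈ ℬ, A ∩ B ∈ ℬ)

/-- `ℬ` is non-degenerate: closed under relative complements (and contains `∅`). -/
def NonDegenerate (ℬ : Set (Set V)) : Prop :=
  (∅ : Set V) ∈ ℬ ∧ ∀ A ∈ ℬ, ∀ B ∈ ℬ, A \ B ∈ ℬ

/-- The labeled space is weakly left-resolving. -/
def WLR (Edge : V → Λ → V → Prop) (ℬ : Set (Set V)) : Prop :=
  ∀ A ∈ ℬ, ∀ B ∈ ℬ, ∀ α : List Λ, IsLP Edge α →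
    relRange Edge (A ∩ B) α = relRange Edge A α ∩ relRange Edge B α

/-- `ℬ` is the smallest non-degenerate accommodating set. -/
def SmallestAccom (Edge : V → Λ → V → Prop) (ℬ : Set (Set V)) : Prop :=
  Accommodating Edge ℬ ∧ NonDegenerate ℬ ∧
    ∀ ℬ' : Set (Set V), Accommodating Edge ℬ' → NonDegenerate ℬ' → ℬ ⊆ ℬ'

/-- `x_{[1,n]}`: the length-`n` prefix of an infinite word. -/
def wordPrefix (x : ℕ → Λ) (n : ℕ) : List Λ := List.ofFn fun i : Fin n => x i.val

/-- `x` lies in the closure of `L(E^∞)`: all finite prefixes are labeled paths. -/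
def InfWord (Edge : V → Λ → V → Prop) (x : ℕ → Λ) : Prop :=
  ∀ n : ℕ, 1 ≤ n → IsLP Edge (wordPrefix x n)

/-- Strong cofinality of a labeled space. -/
def StrCofinal (Edge : V → Λ → V → Prop) (ℬ : Set (Set V)) : Prop :=
  ∀ A ∈ ℬ, A.Nonempty → ∀ x : ℕ → Λ, InfWord Edge x →
    ∃ N : ℕ, 1 ≤ N ∧ ∃ l : List (List Λ), (∀ α ∈ l, IsLP Edge α) ∧
      lrange Edge (wordPrefix x N) ⊆ ⋃ α ∈ l, relRange Edge A α

/-- Minimality: the only hereditary saturated subsets of `ℬ` are `{∅}` and `ℬ`. -/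
def MinimalLS (Edge : V → Λ → V → Prop) (ℬ : Set (Set V)) : Prop :=
  ∀ H : Set (Set V), Hered Edge ℬ H → Satur Edge ℬ H → H ⊆ {∅} ∨ H = ℬ

/-- `L(SEⁿ)`: labels of paths of length `n` with source in `S`. -/
def labelsOfLen (Edge : V → Λ → V → Prop) (S : Set V) (n : ℕ) : Set (List Λ) :=
  {β | β.length = n ∧ (relRange Edge S β).Nonempty}

/-- The labeled space is disagreeable. -/
def Disagreeable (Edge : V → Λ → V → Prop) (ℬ : Set (Set V)) : Prop :=
  ∀ A ∈ ℬ, A.Nonempty → ∀ β : List Λ, IsLP Edge β →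
    ∃ n : ℕ, 1 ≤ n ∧ labelsOfLen Edge A (β.length * n) ≠ {(List.replicate n β).flatten}

/-- `(α, A)` is a cycle. -/
def IsCycle (Edge : V → Λ → V → Prop) (ℬ : Set (Set V)) (α : List Λ) (A : Set V) : Prop :=
  IsLP Edge α ∧ A ∈ ℬ ∧ A.Nonempty ∧ ∀ B ∈ ℬ, B ⊆ A → relRange Edge B α = B

/-- The cycle `(α, A)` has an exit. -/
def CycleHasExit (Edge : V → Λ → V → Prop) (ℬ : Set (Set V)) (α : List Λ) (A : Set V) : Prop :=
  ∃ t : ℕ, 1 ≤ t ∧ t ≤ α.length ∧ ∃ B ∈ ℬ, B.Nonempty ∧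
    B ⊆ relRange Edge A (α.take t) ∧
    edgeLabels Edge B ≠ {a : Λ | α[t % α.length]? = some a}

/-- The cycle `(α, A)` has no exits. -/
def CycleNoExit (Edge : V → Λ → V → Prop) (ℬ : Set (Set V)) (α : List Λ) (A : Set V) : Prop :=
  ∀ t : ℕ, 1 ≤ t → t ≤ α.length → ∀ B ∈ ℬ, B.Nonempty →
    B ⊆ relRange Edge A (α.take t) →
    RegularSet Edge ℬ B ∧ edgeLabels Edge B = {a : Λ | α[t % α.length]? = some a}

/-- Condition (L): every cycle has an exit. -/
def CondL (Edge : V → Λ → V → Prop) (ℬ : Set (Set V)) : Prop :=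
  ∀ (α : List Λ) (A : Set V), IsCycle Edge ℬ α A → CycleHasExit Edge ℬ α A

/-- `α` is a loop at `A`. -/
def IsLoop (Edge : V → Λ → V → Prop) (α : List Λ) (A : Set V) : Prop :=
  IsLP Edge α ∧ A ⊆ relRange Edge A α

/-- The loop `(α, A)` has an exit. -/
def LoopHasExit (Edge : V → Λ → V → Prop) (α : List Λ) (A : Set V) : Prop :=
  {β : List Λ | ∃ k : ℕ, 1 ≤ k ∧ k ≤ α.length ∧ β = α.take k} ⊂
      {β : List Λ | 1 ≤ β.length ∧ β.length ≤ α.length ∧ (relRange Edge A β).Nonempty} ∨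
    A ⊂ relRange Edge A α

/-- `β` is an irreducible path: not a repetition of a proper initial path. -/
def IrreduciblePath (β : List Λ) : Prop :=
  ∀ k : ℕ, 1 ≤ k → k < β.length → ∀ m : ℕ, β ≠ (List.replicate m (β.take k)).flatten

/-- The generalized vertex `[v]_l`. -/
def gvClass (Edge : V → Λ → V → Prop) (l : ℕ) (v : V) : Set V :=
  {w | ∀ β : List Λ, 1 ≤ β.length → β.length ≤ l → (v ∈ lrange Edge β ↔ w ∈ lrange Edge β)}

/-- `s(x)`: sources of infinite paths labeled by `x`. -/
def srcInf (Edge : V → Λ → V → Prop) (x : ℕ → Λ) : Set V :=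
  {w | ∃ p : ℕ → V, p 0 = w ∧ ∀ n : ℕ, Edge (p n) (x n) (p (n + 1))}

/-!
If `ℰ` is minimal and `A ∈ ℰ` is nonempty, the saturation `S(H(A))` of the sets covered by
finitely many relative ranges `r(A, α)` is hereditary, saturated and contains `A`, hence is all
of `ℰ`. Since every set is regular, the second clause in the definition of `S(H(A))` is vacuous,
and `r(x_{[1,1]}) ∈ S(H(A))` says that `r(x_{[1,N]}) ∈ H(A)` for large `N`; one more letter makes
all covering paths nonempty, which is strong cofinality.

Conversely, let `H` be hereditary and saturated, containing a nonempty `A` but missing `B ∈ ℰ`.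
By saturation, a set outside `H` has a one-letter range outside `H`, so there is an infinite
word `x` with `r(B, x_{[1,n]}) ∉ H` for all `n`. Strong cofinality covers some `r(x_{[1,N]})` by
ranges `r(A, λᵢ) ∈ H`, which puts `r(B, x_{[1,N]}) ⊆ r(x_{[1,N]})` into `H`.
-/

variable {Edge : V → Λ → V → Prop} {ℰ H : Set (Set V)} {A B C S : Set V} {α β γ : List Λ}

section relRange

theorem relRange_cons (S : Set V) (a : Λ) (α : List Λ) :
    relRange Edge S (a :: α) = relRange Edge (relRange Edge S [a]) α := rfl

theorem relRange_append (S : Set V) (α β : List Λ) :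
    relRange Edge S (α ++ β) = relRange Edge (relRange Edge S α) β := by
  induction α generalizing S with
  | nil => rfl
  | cons a α ih => exact ih _

theorem lrange_append (α β : List Λ) :
    lrange Edge (α ++ β) = relRange Edge (lrange Edge α) β :=
  relRange_append _ α β

theorem relRange_mono {S T : Set V} (h : S ⊆ T) (α : List Λ) :
    relRange Edge S α ⊆ relRange Edge T α := by
  induction α generalizing S T with
  | nil => exact h
  | cons a α ih => exact ih fun w ⟨u, hu, he⟩ => ⟨u, h hu, he⟩

theorem relRange_subset_lrange (S : Set V) (α : List Λ) :
    relRange Edge S α ⊆ lrange Edge α :=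
  relRange_mono (Set.subset_univ S) α

theorem relRange_empty (α : List Λ) : relRange Edge (∅ : Set V) α = ∅ := by
  induction α with
  | nil => rfl
  | cons a α ih => simpa [relRange] using ih

theorem relRange_iUnion {ι : Sort*} (S : ι → Set V) (α : List Λ) :
    relRange Edge (⋃ i, S i) α = ⋃ i, relRange Edge (S i) α := by
  induction α generalizing S with
  | nil => rfl
  | cons a α ih =>
    show relRange Edge _ α = ⋃ i, relRange Edge _ α
    rw [← ih]
    congr 1
    ext w
    simp only [Set.mem_iUnion, Set.mem_ofPred_eq]
    exact ⟨fun ⟨u, ⟨i, hu⟩, he⟩ => ⟨i, u, hu, he⟩, fun ⟨i, u, hu, he⟩ => ⟨u, ⟨i, hu⟩, he⟩⟩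

theorem relRange_union (S T : Set V) (α : List Λ) :
    relRange Edge (S ∪ T) α = relRange Edge S α ∪ relRange Edge T α := by
  rw [Set.union_eq_iUnion, Set.union_eq_iUnion, relRange_iUnion]
  congr 1
  ext b
  cases b <;> rfl

theorem isLP_of_relRange_nonempty (hα : α ≠ []) (h : (relRange Edge S α).Nonempty) :
    IsLP Edge α :=
  ⟨hα, h.mono (relRange_subset_lrange S α)⟩

theorem eq_nil_or_isLP_of_relRange_nonempty (h : (relRange Edge S α).Nonempty) :
    α = [] ∨ IsLP Edge α :=
  or_iff_not_imp_left.2 fun hα => isLP_of_relRange_nonempty hα h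

theorem IsLP.of_append_right (h : IsLP Edge (α ++ β)) (hβ : β ≠ []) : IsLP Edge β :=
  isLP_of_relRange_nonempty hβ (by rw [← lrange_append]; exact h.2)

theorem exists_subset_biUnion_relRange_restrict {l : List (List Λ)} (p : List Λ → Prop)
    (hp : ∀ α ∈ l, (relRange Edge A α).Nonempty → p α)
    (h : B ⊆ ⋃ α ∈ l, relRange Edge A α) :
    ∃ l' : List (List Λ), (∀ α ∈ l', p α) ∧ B ⊆ ⋃ α ∈ l', relRange Edge A α := by
  classical
  refine ⟨l.filter (p ·), fun α hα => by simpa using (List.mem_filter.1 hα).2, fun w hw => ?_⟩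
  obtain ⟨α, hα, hwα⟩ := Set.mem_iUnion₂.1 (h hw)
  exact Set.mem_iUnion₂.2 ⟨α, List.mem_filter.2 ⟨hα, by simpa using hp α hα ⟨w, hwα⟩⟩, hwα⟩

theorem relRange_subset_biUnion_append {l : List (List Λ)}
    (h : C ⊆ ⋃ α ∈ l, relRange Edge A α) (γ : List Λ) :
    relRange Edge C γ ⊆ ⋃ α ∈ l.map (· ++ γ), relRange Edge A α := by
  refine (relRange_mono h γ).trans ?_
  simp_rw [relRange_iUnion]
  refine Set.iUnion₂_subset fun α hα => ?_
  rw [← relRange_append]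
  exact Set.subset_biUnion_of_mem (List.mem_map_of_mem (f := (· ++ γ)) hα)

end relRange

section wordPrefix

theorem wordPrefix_add (x : ℕ → Λ) (m n : ℕ) :
    wordPrefix x (m + n) = wordPrefix x m ++ List.ofFn fun i : Fin n => x (m + i) := by
  rw [wordPrefix, List.ofFn_add]
  rfl

theorem wordPrefix_succ (x : ℕ → Λ) (n : ℕ) :
    wordPrefix x (n + 1) = wordPrefix x n ++ [x n] := by
  simp [wordPrefix_add]

theorem exists_forall_wordPrefix {P : List Λ → Prop} (h₀ : P [])
    (hstep : ∀ γ, P γ → ∃ a, P (γ ++ [a])) : ∃ x : ℕ → Λ, ∀ n, P (wordPrefix x n) := by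
  choose f hf using hstep
  let g : ℕ → {γ // P γ} := fun n =>
    Nat.rec ⟨[], h₀⟩ (fun _ γ => ⟨γ.1 ++ [f γ.1 γ.2], hf γ.1 γ.2⟩) n
  refine ⟨fun n => f (g n).1 (g n).2, fun n => ?_⟩
  suffices wordPrefix _ n = (g n).1 from this ▸ (g n).2
  induction n with
  | zero => rfl
  | succ n ih => rw [wordPrefix_succ, ih]

theorem infWord_of_relRange_nonempty {x : ℕ → Λ}
    (h : ∀ n, (relRange Edge B (wordPrefix x n)).Nonempty) : InfWord Edge x :=
  fun n hn => isLP_of_relRange_nonempty (List.ne_nil_of_length_pos (by simp only [wordPrefix, List.length_ofFn]; exact hn))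
    (h n)

end wordPrefix

theorem edgeLabels_finite_of_labelsOfLen_one (h : (labelsOfLen Edge S 1).Finite) :
    (edgeLabels Edge S).Finite :=
  (h.preimage List.singleton_injective.injOn).subset fun _ ⟨u, hu, w, he⟩ => ⟨rfl, w, u, hu, he⟩

theorem regularSet_of_edgeLabels_finite (hfin : ∀ B ∈ ℰ, (edgeLabels Edge B).Finite)
    (hnosink : ∀ v : V, ∃ a w, Edge v a w) (S : Set V) : RegularSet Edge ℰ S :=
  fun B hB _ ⟨u, hu⟩ => ⟨hfin B hB, let ⟨a, w, he⟩ := hnosink u; ⟨a, u, hu, w, he⟩⟩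

theorem relRange_mem (hacc : Accommodating Edge ℰ) (hempty : ∅ ∈ ℰ) (hB : B ∈ ℰ)
    (γ : List Λ) : relRange Edge B γ ∈ ℰ := by
  rcases (relRange Edge B γ).eq_empty_or_nonempty with he | hne
  · exact he ▸ hempty
  · rcases eq_nil_or_isLP_of_relRange_nonempty hne with rfl | hγ
    · exact hB
    · exact hacc.2.1 B hB γ hγ

section HSet

theorem mem_HSet_of_subset_biUnion {l : List (List Λ)} (hB : B ∈ ℰ)
    (h : B ⊆ ⋃ α ∈ l, relRange Edge A α) : B ∈ HSet Edge ℰ A :=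
  ⟨hB, exists_subset_biUnion_relRange_restrict _
    (fun _ _ => eq_nil_or_isLP_of_relRange_nonempty) h⟩

theorem empty_mem_HSet (hempty : ∅ ∈ ℰ) : ∅ ∈ HSet Edge ℰ A :=
  mem_HSet_of_subset_biUnion (l := []) hempty (Set.empty_subset _)

theorem relRange_mem_HSet_self (hacc : Accommodating Edge ℰ) (hempty : ∅ ∈ ℰ) (hA : A ∈ ℰ)
    (δ : List Λ) : relRange Edge A δ ∈ HSet Edge ℰ A :=
  mem_HSet_of_subset_biUnion (l := [δ]) (relRange_mem hacc hempty hA δ) (by simp)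

theorem mem_HSet_of_subset (hB : B ∈ ℰ) (hBC : B ⊆ C) (hC : C ∈ HSet Edge ℰ A) :
    B ∈ HSet Edge ℰ A :=
  let ⟨_, l, hl, hcov⟩ := hC
  ⟨hB, l, hl, hBC.trans hcov⟩

theorem union_mem_HSet (hacc : Accommodating Edge ℰ) (hB : B ∈ HSet Edge ℰ A)
    (hC : C ∈ HSet Edge ℰ A) : B ∪ C ∈ HSet Edge ℰ A := by
  obtain ⟨hB, l₁, -, h₁⟩ := hB
  obtain ⟨hC, l₂, -, h₂⟩ := hC
  refine mem_HSet_of_subset_biUnion (l := l₁ ++ l₂) (hacc.2.2.1 B hB C hC) ?_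
  refine Set.union_subset (h₁.trans ?_) (h₂.trans ?_) <;>
    refine Set.iUnion₂_subset fun α hα => Set.subset_biUnion_of_mem ?_
  · exact List.mem_append_left _ hα
  · exact List.mem_append_right _ hα

theorem relRange_mem_HSet (hacc : Accommodating Edge ℰ) (hempty : ∅ ∈ ℰ)
    (hC : C ∈ HSet Edge ℰ A) (γ : List Λ) : relRange Edge C γ ∈ HSet Edge ℰ A := by
  obtain ⟨hC, l, -, hcov⟩ := hC
  exact mem_HSet_of_subset_biUnion (relRange_mem hacc hempty hC γ)
    (relRange_subset_biUnion_append hcov γ)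

theorem exists_isLP_cover_of_mem_HSet (hC : C ∈ HSet Edge ℰ A) (hγ : γ ≠ []) :
    ∃ l : List (List Λ), (∀ α ∈ l, IsLP Edge α) ∧
      relRange Edge C γ ⊆ ⋃ α ∈ l, relRange Edge A α := by
  obtain ⟨-, l, -, hcov⟩ := hC
  refine exists_subset_biUnion_relRange_restrict _ (fun α hα hne => ?_)
    (relRange_subset_biUnion_append hcov γ)
  obtain ⟨β, -, rfl⟩ := List.mem_map.1 hα
  exact isLP_of_relRange_nonempty (by simp [hγ]) hne

end HSet

section SHSet

variable (hacc : Accommodating Edge ℰ) (hempty : ∅ ∈ ℰ) (hreg : ∀ S, RegularSet Edge ℰ S)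
include hacc hempty hreg

theorem mem_SHSet_iff : B ∈ SHSet Edge ℰ A ↔
    B ∈ ℰ ∧ ∃ n : ℕ, ∀ δ : List Λ, n ≤ δ.length → relRange Edge B δ ∈ HSet Edge ℰ A := by
  refine ⟨fun ⟨hB, n, h, _⟩ => ⟨hB, n, fun δ hδ => ?_⟩, fun ⟨hB, n, h⟩ =>
    ⟨hB, n, fun β _ hβ => h β hβ.ge, fun γ _ _ => ⟨∅, empty_mem_HSet hempty, _,
      relRange_mem hacc hempty hB γ, hreg _, (Set.empty_union _).symm⟩⟩⟩
  rw [← List.take_append_drop n δ, relRange_append]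
  refine relRange_mem_HSet hacc hempty ?_ _
  rcases (relRange Edge B (δ.take n)).eq_empty_or_nonempty with he | hne
  · exact he ▸ empty_mem_HSet hempty
  · exact h _ (eq_nil_or_isLP_of_relRange_nonempty hne) (List.length_take_of_le hδ)

theorem SHSet_hered : Hered Edge ℰ (SHSet Edge ℰ A) := by
  simp only [Hered, mem_SHSet_iff hacc hempty hreg]
  refine ⟨fun B hB => hB.1, ?_, ?_, ?_⟩
  · rintro B ⟨hB, n, h⟩ α hα
    refine ⟨hacc.2.1 B hB α hα, n, fun δ hδ => ?_⟩
    rw [← relRange_append]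
    exact h _ (by simp; omega)
  · rintro B ⟨hB, m, hm⟩ C ⟨hC, n, hn⟩
    refine ⟨hacc.2.2.1 B hB C hC, max m n, fun δ hδ => ?_⟩
    rw [relRange_union]
    exact union_mem_HSet hacc (hm δ (le_of_max_le_left hδ)) (hn δ (le_of_max_le_right hδ))
  · rintro B ⟨-, n, h⟩ C hC hCB
    exact ⟨hC, n, fun δ hδ =>
      mem_HSet_of_subset (relRange_mem hacc hempty hC δ) (relRange_mono hCB δ) (h δ hδ)⟩

theorem SHSet_satur : Satur Edge ℰ (SHSet Edge ℰ A) := by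
  intro B hB hBreg hall
  have hfin : (edgeLabels Edge B).Finite := by
    rcases B.eq_empty_or_nonempty with rfl | hne
    · simp [edgeLabels]
    · exact (hBreg B hB subset_rfl hne).1
  have hlabel : ∀ a ∈ edgeLabels Edge B, ∀ᶠ n in Filter.atTop,
      ∀ δ : List Λ, n ≤ δ.length → relRange Edge (relRange Edge B [a]) δ ∈ HSet Edge ℰ A := by
    rintro a ⟨u, hu, w, he⟩
    obtain ⟨-, n, h⟩ := (mem_SHSet_iff hacc hempty hreg).1
      (hall [a] (isLP_of_relRange_nonempty (List.cons_ne_nil _ _) ⟨w, u, hu, he⟩))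
    exact Filter.eventually_atTop.2 ⟨n, fun m hm δ hδ => h δ (hm.trans hδ)⟩
  obtain ⟨n, hn⟩ := ((Filter.eventually_all_finite hfin).2 hlabel).exists
  refine (mem_SHSet_iff hacc hempty hreg).2 ⟨hB, n + 1, fun δ hδ => ?_⟩
  obtain ⟨a, δ, rfl⟩ := List.exists_cons_of_length_pos (by omega : 0 < δ.length)
  rw [relRange_cons]
  by_cases ha : a ∈ edgeLabels Edge B
  · exact hn a ha δ (by simpa using hδ)
  · have : relRange Edge B [a] = ∅ :=
      Set.eq_empty_of_forall_notMem fun w ⟨u, hu, he⟩ => ha ⟨u, hu, w, he⟩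
    rw [this, relRange_empty]
    exact empty_mem_HSet hempty

theorem self_mem_SHSet (hA : A ∈ ℰ) : A ∈ SHSet Edge ℰ A :=
  (mem_SHSet_iff hacc hempty hreg).2 ⟨hA, 0, fun δ _ => relRange_mem_HSet_self hacc hempty hA δ⟩

theorem MinimalLS.SHSet_eq (hmin : MinimalLS Edge ℰ) (hA : A ∈ ℰ) (hAne : A.Nonempty) :
    SHSet Edge ℰ A = ℰ :=
  (hmin _ (SHSet_hered hacc hempty hreg) (SHSet_satur hacc hempty hreg)).resolve_left
    fun h => hAne.ne_empty (h (self_mem_SHSet hacc hempty hreg hA))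

theorem exists_lrange_wordPrefix_cover_of_mem_SHSet {x : ℕ → Λ}
    (h : lrange Edge (wordPrefix x 1) ∈ SHSet Edge ℰ A) :
    ∃ N : ℕ, 1 ≤ N ∧ ∃ l : List (List Λ), (∀ α ∈ l, IsLP Edge α) ∧
      lrange Edge (wordPrefix x N) ⊆ ⋃ α ∈ l, relRange Edge A α := by
  obtain ⟨-, n, hn⟩ := (mem_SHSet_iff hacc hempty hreg).1 h
  have hC : lrange Edge (wordPrefix x (1 + n)) ∈ HSet Edge ℰ A := by
    rw [wordPrefix_add, lrange_append]
    exact hn _ (by simp)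
  obtain ⟨l, hl, hcov⟩ := exists_isLP_cover_of_mem_HSet hC (List.cons_ne_nil (x (1 + n)) [])
  exact ⟨1 + n + 1, by omega, l, hl, by rwa [wordPrefix_succ, lrange_append]⟩

theorem MinimalLS.strCofinal (hmin : MinimalLS Edge ℰ) : StrCofinal Edge ℰ :=
  fun _ hA hAne _ hx => exists_lrange_wordPrefix_cover_of_mem_SHSet hacc hempty hreg
    ((hmin.SHSet_eq hacc hempty hreg hA hAne).ge (hacc.1 _ (hx 1 le_rfl)))

end SHSet

theorem Hered.biUnion_relRange_mem (hH : Hered Edge ℰ H) (hempty : ∅ ∈ H) (hA : A ∈ H)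
    {l : List (List Λ)} (hl : ∀ α ∈ l, IsLP Edge α) : (⋃ α ∈ l, relRange Edge A α) ∈ H := by
  induction l with
  | nil => simpa using hempty
  | cons α l ih =>
    simp only [List.mem_cons, Set.iUnion_iUnion_eq_or_left]
    exact hH.2.2.1 _ (hH.2.1 A hA α (hl α List.mem_cons_self)) _
      (ih fun β hβ => hl β (List.mem_cons_of_mem _ hβ))

theorem exists_relRange_singleton_not_mem (hH : Hered Edge ℰ H) (hsat : Satur Edge ℰ H)
    (hC : C ∈ ℰ) (hCreg : RegularSet Edge ℰ C) (hCH : C ∉ H) :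
    ∃ a : Λ, relRange Edge C [a] ∉ H := by
  by_contra! hall
  refine hCH (hsat C hC hCreg fun α hα => ?_)
  obtain ⟨a, β, rfl⟩ := List.exists_cons_of_ne_nil hα.1
  rw [relRange_cons]
  rcases eq_or_ne β [] with rfl | hβ
  · exact hall a
  · exact hH.2.1 _ (hall a) β (IsLP.of_append_right (α := [a]) hα hβ)

theorem StrCofinal.exists_lrange_wordPrefix_mem (hscf : StrCofinal Edge ℰ)
    (hacc : Accommodating Edge ℰ) (hH : Hered Edge ℰ H) (hempty : ∅ ∈ H) (hA : A ∈ H)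
    (hAne : A.Nonempty) {x : ℕ → Λ} (hx : InfWord Edge x) :
    ∃ N, lrange Edge (wordPrefix x N) ∈ H :=
  let ⟨N, hN, _, hl, hcov⟩ := hscf A (hH.1 hA) hAne x hx
  ⟨N, hH.2.2.2 _ (hH.biUnion_relRange_mem hempty hA hl) _ (hacc.1 _ (hx N hN)) hcov⟩

theorem StrCofinal.minimalLS (hscf : StrCofinal Edge ℰ) (hacc : Accommodating Edge ℰ)
    (hempty : ∅ ∈ ℰ) (hreg : ∀ S, RegularSet Edge ℰ S) : MinimalLS Edge ℰ := by
  intro H hH hsat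
  refine or_iff_not_imp_left.2 fun hH₀ => ?_
  obtain ⟨A, hAH, hAne⟩ : ∃ A ∈ H, A.Nonempty := by
    simpa [Set.subset_def, Set.nonempty_iff_ne_empty] using hH₀
  have hemptyH : ∅ ∈ H := hH.2.2.2 A hAH ∅ hempty (Set.empty_subset A)
  refine hH.1.antisymm fun B hB => by_contra fun hBH => ?_
  obtain ⟨x, hx⟩ := exists_forall_wordPrefix (P := fun γ => relRange Edge B γ ∉ H) hBH
    fun γ hγ =>
      let ⟨a, ha⟩ := exists_relRange_singleton_not_mem hH hsat (relRange_mem hacc hempty hB γ)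
        (hreg _) hγ
      ⟨a, by rwa [relRange_append]⟩
  have hne : ∀ n, (relRange Edge B (wordPrefix x n)).Nonempty := fun n =>
    Set.nonempty_iff_ne_empty.2 fun he => hx n (he ▸ hemptyH)
  obtain ⟨N, hN⟩ := hscf.exists_lrange_wordPrefix_mem hacc hH hemptyH hAH hAne
    (infWord_of_relRange_nonempty hne)
  exact hx N (hH.2.2.2 _ hN _ (relRange_mem hacc hempty hB _) (relRange_subset_lrange B _))

theorem minimal_iff_strongly_cofinal_general (Edge : V → Λ → V → Prop) (ℰ : Set (Set V))
    (hsm : SmallestAccom Edge ℰ)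
    (hsetfin : ∀ A ∈ ℰ, ∀ n : ℕ, 1 ≤ n → (labelsOfLen Edge A n).Finite)
    (hnosink : ∀ v : V, ∃ a w, Edge v a w) :
    MinimalLS Edge ℰ ↔ StrCofinal Edge ℰ := by
  obtain ⟨hacc, ⟨hempty, -⟩, -⟩ := hsm
  have hreg : ∀ S, RegularSet Edge ℰ S := regularSet_of_edgeLabels_finite
    (fun B hB => edgeLabels_finite_of_labelsOfLen_one (hsetfin B hB 1 le_rfl)) hnosink
  exact ⟨fun hmin => hmin.strCofinal hacc hempty hreg, fun hscf => hscf.minimalLS hacc hempty hreg⟩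

/-- for a set-finite labeled space with no sinks, minimality is equivalent
to strong cofinality. -/
theorem minimal_iff_strongly_cofinal (Edge : V → Λ → V → Prop) (ℰ : Set (Set V))
    (hsm : SmallestAccom Edge ℰ) (hwlr : WLR Edge ℰ)
    (hsetfin : ∀ A ∈ ℰ, ∀ n : ℕ, 1 ≤ n → (labelsOfLen Edge A n).Finite)
    (hnosink : ∀ v : V, ∃ a w, Edge v a w) :
    MinimalLS Edge ℰ ↔ StrCofinal Edge ℰ :=
  minimal_iff_strongly_cofinal_general Edge ℰ hsm hsetfin hnosink
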